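/- Let n ≥ 2 be an integer and S : (L^0)^n → (L^0)^n an injective map with the local property satisfying S(θ) = θ which maps each L^0-line onto an L^0-line. Then for any y ∈ (L^0)^n with full support, S(−y) = −S(y). -/
import Mathlib


/-!
Statements from "The fundamental theorem of affine geometry in `(L⁰)ⁿ`" (Wu–Long).

`L⁰`, the algebra of equivalence classes (under `P`-a.e. equality) of real valued
random variables on a probability space `(Ω, F, P)`, is modeled as `Ω →ₘ[P] ℝ`,
and `(L⁰)ⁿ` as `Fin n → (Ω →ₘ[P] ℝ)` with the pointwise `L⁰`-module structure.
-/

open MeasureTheory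

noncomputable section

variable {Ω : Type*} [MeasurableSpace Ω] {P : Measure Ω}

/-- `L⁰ = Ω →ₘ[P] ℝ` is a commutative ring under the pointwise a.e. operations. -/
instance : CommRing (Ω →ₘ[P] ℝ) :=
  { (inferInstance : AddCommGroup (Ω →ₘ[P] ℝ)),
    (inferInstance : CommMonoid (Ω →ₘ[P] ℝ)) with
    left_distrib := fun a b c => AEEqFun.toGerm_injective <| by
      simp only [AEEqFun.mul_toGerm, AEEqFun.add_toGerm, mul_add]
    right_distrib := fun a b c => AEEqFun.toGerm_injective <| by
      simp only [AEEqFun.mul_toGerm, AEEqFun.add_toGerm, add_mul]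
    zero_mul := fun a => AEEqFun.toGerm_injective <| by
      simp only [AEEqFun.mul_toGerm, AEEqFun.zero_toGerm, zero_mul]
    mul_zero := fun a => AEEqFun.toGerm_injective <| by
      simp only [AEEqFun.mul_toGerm, AEEqFun.zero_toGerm, mul_zero] }

/-- `Ĩ_A` : the equivalence class of the indicator function of a measurable set `A`. -/
def ind (P : Measure Ω) {A : Set Ω} (hA : MeasurableSet A) : Ω →ₘ[P] ℝ :=
  AEEqFun.mk (A.indicator fun _ => (1 : ℝ)) (aestronglyMeasurable_const.indicator hA)

namespace ImageNegAux

lemma aeeq_mul {a b : Ω →ₘ[P] ℝ} {f g : Ω → ℝ} (ha : ⇑a =ᵐ[P] f) (hb : ⇑b =ᵐ[P] g) :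
    ⇑(a * b) =ᵐ[P] fun ω => f ω * g ω := by
  filter_upwards [AEEqFun.coeFn_mul a b, ha, hb] with ω h1 h2 h3
  simp [h1, h2, h3]

lemma aeeq_add {a b : Ω →ₘ[P] ℝ} {f g : Ω → ℝ} (ha : ⇑a =ᵐ[P] f) (hb : ⇑b =ᵐ[P] g) :
    ⇑(a + b) =ᵐ[P] fun ω => f ω + g ω := by
  filter_upwards [AEEqFun.coeFn_add a b, ha, hb] with ω h1 h2 h3
  simp [h1, h2, h3]

lemma aeeq_sub {a b : Ω →ₘ[P] ℝ} {f g : Ω → ℝ} (ha : ⇑a =ᵐ[P] f) (hb : ⇑b =ᵐ[P] g) :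
    ⇑(a - b) =ᵐ[P] fun ω => f ω - g ω := by
  filter_upwards [AEEqFun.coeFn_sub a b, ha, hb] with ω h1 h2 h3
  simp [h1, h2, h3]

lemma aeeq_one : ⇑(1 : Ω →ₘ[P] ℝ) =ᵐ[P] fun _ => (1:ℝ) := AEEqFun.coeFn_one

lemma aeeq_self (a : Ω →ₘ[P] ℝ) : ⇑a =ᵐ[P] ⇑a := Filter.EventuallyEq.rfl

lemma coeFn_ind {A : Set Ω} (hA : MeasurableSet A) :
    ⇑(ind P hA) =ᵐ[P] A.indicator (fun _ => (1:ℝ)) := AEEqFun.coeFn_mk _ _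

lemma eq_zero_of_aeeq {a : Ω →ₘ[P] ℝ} {f : Ω → ℝ} (ha : ⇑a =ᵐ[P] f)
    (h : ∀ᵐ ω ∂P, f ω = 0) : a = 0 := by
  refine AEEqFun.ext ?_
  filter_upwards [ha, h, AEEqFun.coeFn_zero (β := ℝ) (μ := P)] with ω h1 h2 h3
  simp [h1, h2, h3]

lemma ind_mul_two_eq_zero {C : Set Ω} (hC : MeasurableSet C)
    (h : ind P hC * 2 = 0) : P C = 0 := by
  rw [measure_eq_zero_iff_ae_notMem]
  have h2 : ⇑(ind P hC * 2) =ᵐ[P] fun ω => C.indicator (fun _ => (1:ℝ)) ω * (1+1) := by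
    have : (2 : Ω →ₘ[P] ℝ) = 1 + 1 := one_add_one_eq_two.symm
    rw [this]
    exact aeeq_mul (coeFn_ind hC) (aeeq_add aeeq_one aeeq_one)
  rw [h] at h2
  filter_upwards [h2.symm, AEEqFun.coeFn_zero (β := ℝ) (μ := P)] with ω h1 h3 hω
  rw [h3] at h1
  rw [Set.indicator_of_mem hω] at h1
  norm_num at h1

lemma one_ne_zero' [IsProbabilityMeasure P] : (1 : Ω →ₘ[P] ℝ) ≠ 0 := by
  intro h
  have h1 : ⇑(1 : Ω →ₘ[P] ℝ) =ᵐ[P] ⇑(0 : Ω →ₘ[P] ℝ) := by rw [h]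
  have h2 : ∀ᵐ ω ∂P, (1:ℝ) = 0 := by
    filter_upwards [h1, aeeq_one (P := P), AEEqFun.coeFn_zero (β := ℝ) (μ := P)] with ω ha hb hc
    rw [← hb, ha, hc]; rfl
  have : (ae P).NeBot := ae_neBot.mpr (IsProbabilityMeasure.ne_zero P)
  obtain ⟨ω, hω⟩ := h2.exists
  exact one_ne_zero hω

lemma ind_mul_compl {A : Set Ω} (hA : MeasurableSet A) :
    ind P hA * ind P hA.compl = 0 := by
  refine AEEqFun.ext ?_
  filter_upwards [AEEqFun.coeFn_mul (ind P hA) (ind P hA.compl), coeFn_ind hA,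
    coeFn_ind hA.compl, AEEqFun.coeFn_zero (β := ℝ) (μ := P)] with ω h1 h2 h3 h4
  rw [h1]
  simp only [Pi.mul_apply, h2, h3, h4, Pi.zero_apply]
  by_cases hω : ω ∈ A <;> simp [Set.indicator_apply, hω]

lemma ind_add_compl {A : Set Ω} (hA : MeasurableSet A) :
    ind P hA + ind P hA.compl = 1 := by
  refine AEEqFun.ext ?_
  filter_upwards [AEEqFun.coeFn_add (ind P hA) (ind P hA.compl), coeFn_ind hA,
    coeFn_ind hA.compl, AEEqFun.coeFn_one (β := ℝ) (μ := P)] with ω h1 h2 h3 h4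
  rw [h1]
  simp only [Pi.add_apply, h2, h3, h4, Pi.one_apply]
  by_cases hω : ω ∈ A <;> simp [Set.indicator_apply, hω]

lemma S_of_ind_smul {n : ℕ} (S : (Fin n → Ω →ₘ[P] ℝ) → (Fin n → Ω →ₘ[P] ℝ))
    (hloc : ∀ (x : Fin n → Ω →ₘ[P] ℝ) (A : Set Ω) (hA : MeasurableSet A),
        ind P hA • S (ind P hA • x) = ind P hA • S x)
    (hS0 : S 0 = 0) {A : Set Ω} (hA : MeasurableSet A) (p : Fin n → Ω →ₘ[P] ℝ) :
    S (ind P hA • p) = ind P hA • S p := by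
  set e := ind P hA with he
  set e' := ind P hA.compl with he'
  have h1 : e • S (e • p) = e • S p := hloc p A hA
  have hzero : e' • (e • p) = (0 : Fin n → Ω →ₘ[P] ℝ) := by
    funext i
    show e' * (e * p i) = 0
    rw [← mul_assoc, he, he', mul_comm (ind P hA.compl) (ind P hA), ind_mul_compl hA, zero_mul]
  have h2 : e' • S (e • p) = 0 := by
    have := hloc (e • p) Aᶜ hA.compl
    rw [hzero, hS0] at this
    rw [← this]
    funext i
    show e' * (0 : Fin n → Ω →ₘ[P] ℝ) i = (0 : Fin n → Ω →ₘ[P] ℝ) i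
    show e' * 0 = (0 : Ω →ₘ[P] ℝ)
    exact mul_zero e'
  calc S (e • p) = e • S (e • p) + e' • S (e • p) := by
        funext i
        show S (e • p) i = e * S (e • p) i + e' * S (e • p) i
        rw [← add_mul, he, he', ind_add_compl hA, one_mul]
    _ = e • S p + 0 := by rw [h1, h2]
    _ = e • S p := add_zero _

lemma locinj {n : ℕ} (S : (Fin n → Ω →ₘ[P] ℝ) → (Fin n → Ω →ₘ[P] ℝ))
    (hinj : Function.Injective S)
    (hloc : ∀ (x : Fin n → Ω →ₘ[P] ℝ) (A : Set Ω) (hA : MeasurableSet A),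
        ind P hA • S (ind P hA • x) = ind P hA • S x)
    (hS0 : S 0 = 0) {A : Set Ω} (hA : MeasurableSet A) {p q : Fin n → Ω →ₘ[P] ℝ}
    (h : ind P hA • S p = ind P hA • S q) : ind P hA • p = ind P hA • q := by
  apply hinj
  rw [S_of_ind_smul S hloc hS0 hA p, S_of_ind_smul S hloc hS0 hA q, h]

end ImageNegAux

set_option maxHeartbeats 2000000 in
open ImageNegAux in
/-- from Step 2 of the proof of Theorem 3.1: for `S` as in the
fundamental theorem, `S (-y) = -S y` for every `y` with full support. -/
theorem image_of_neg
    [IsProbabilityMeasure P] (n : ℕ) (hn : 2 ≤ n)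
    (S : (Fin n → Ω →ₘ[P] ℝ) → (Fin n → Ω →ₘ[P] ℝ))
    (hinj : Function.Injective S)
    (hloc : ∀ (x : Fin n → Ω →ₘ[P] ℝ) (A : Set Ω) (hA : MeasurableSet A),
        ind P hA • S (ind P hA • x) = ind P hA • S x)
    (hS0 : S 0 = 0)
    (hline : ∀ x y : Fin n → Ω →ₘ[P] ℝ, x ≠ y →
        S '' {z | ∃ lam : Ω →ₘ[P] ℝ, z = lam • x + (1 - lam) • y}
          = {z | ∃ lam : Ω →ₘ[P] ℝ, z = lam • S x + (1 - lam) • S y}) :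
    ∀ y : Fin n → Ω →ₘ[P] ℝ,
      (∀ (A : Set Ω) (hA : MeasurableSet A), ind P hA • y = 0 → P A = 0) →
      S (-y) = -S y := by
  intro y hy
  classical
  haveI : NeZero n := ⟨by omega⟩
  -- measurable representatives of y
  have hgm0 : ∀ i, AEMeasurable (⇑(y i)) P := fun i => (y i).aestronglyMeasurable.aemeasurable
  obtain ⟨g, hgm, hgy⟩ : ∃ g : Fin n → Ω → ℝ,
      (∀ i, Measurable (g i)) ∧ ∀ i, ⇑(y i) =ᵐ[P] g i :=
    ⟨fun i => (hgm0 i).mk _, fun i => (hgm0 i).measurable_mk, fun i => (hgm0 i).ae_eq_mk⟩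
  -- the partition by the first nonvanishing coordinate
  set A : Fin n → Set Ω := fun k => {ω | (∀ j, j < k → g j ω = 0) ∧ g k ω ≠ 0} with hAdef
  have hAm : ∀ k, MeasurableSet (A k) := by
    intro k
    have h1 : A k = (⋂ j, ⋂ _h : j < k, (g j) ⁻¹' {0}) ∩ ((g k) ⁻¹' {0})ᶜ := by
      ext ω
      simp [hAdef, Set.mem_iInter]
    rw [h1]
    exact (MeasurableSet.iInter fun j => MeasurableSet.iInter fun _ =>
        (hgm j) (measurableSet_singleton 0)).inter ((hgm k) (measurableSet_singleton 0)).compl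
  have hAuniq : ∀ (ω : Ω) (k l : Fin n), ω ∈ A k → ω ∈ A l → k = l := by
    intro ω k l hk hl
    rcases lt_trichotomy k l with h | h | h
    · exact absurd (hl.1 k h) hk.2
    · exact h
    · exact absurd (hk.1 l h) hl.2
  have hAcov : ∀ ω : Ω, (∃ i, g i ω ≠ 0) → ∃ k, ω ∈ A k := by
    rintro ω ⟨i, hi⟩
    set s := Finset.univ.filter (fun j => g j ω ≠ 0) with hsdef
    have hs : s.Nonempty := ⟨i, by simp [hsdef, hi]⟩
    refine ⟨s.min' hs, fun j hj => ?_, ?_⟩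
    · by_contra hj0
      have hmem : j ∈ s := by simp [hsdef, hj0]
      exact absurd hj (not_lt.mpr (s.min'_le j hmem))
    · have := s.min'_mem hs
      simp only [hsdef, Finset.mem_filter] at this
      exact this.2
  -- the null set where y vanishes identically
  have hNmeas : MeasurableSet {ω | ∀ i, g i ω = 0} := by
    have h1 : {ω | ∀ i, g i ω = 0} = ⋂ i, (g i) ⁻¹' {0} := by ext ω; simp
    rw [h1]
    exact MeasurableSet.iInter fun i => (hgm i) (measurableSet_singleton 0)
  have hN : P {ω | ∀ i, g i ω = 0} = 0 := by
    apply hy _ hNmeas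
    funext i
    show ind P hNmeas * y i = (0 : Ω →ₘ[P] ℝ)
    refine eq_zero_of_aeeq (aeeq_mul (coeFn_ind hNmeas) (hgy i)) ?_
    refine Filter.Eventually.of_forall fun ω => ?_
    by_cases hω : ω ∈ {ω | ∀ i, g i ω = 0}
    · rw [Set.indicator_of_mem hω, one_mul]
      exact hω i
    · rw [Set.indicator_of_notMem hω, zero_mul]
  -- the auxiliary element z
  set z : Fin n → Ω →ₘ[P] ℝ := fun j => ind P (hAm (j - 1)) with hzdef
  have hz : ∀ j, ⇑(z j) =ᵐ[P] (A (j-1)).indicator (fun _ => (1:ℝ)) := fun j => coeFn_ind _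
  have hsub_ne : ∀ k : Fin n, k - 1 ≠ k := by
    intro k h
    rw [sub_eq_self, Fin.one_eq_zero_iff] at h
    omega
  -- strong independence of y and z
  have hindep : ∀ a b : Ω →ₘ[P] ℝ, a • y + b • z = 0 → a = 0 ∧ b = 0 := by
    intro a b hab
    have hj : ∀ j : Fin n, ∀ᵐ ω ∂P,
        ⇑a ω * g j ω + ⇑b ω * (A (j-1)).indicator (fun _ => (1:ℝ)) ω = 0 := by
      intro j
      have h0 : a * y j + b * z j = (0 : Ω →ₘ[P] ℝ) := congrFun hab j
      have h1 := aeeq_add (aeeq_mul (aeeq_self a) (hgy j)) (aeeq_mul (aeeq_self b) (hz j))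
      rw [h0] at h1
      filter_upwards [h1, AEEqFun.coeFn_zero (β := ℝ) (μ := P)] with ω hω h0ω
      rw [← hω, h0ω]; rfl
    have hal : ∀ᵐ ω ∂P, ⇑a ω = 0 ∧ ⇑b ω = 0 := by
      have hcov : ∀ᵐ ω ∂P, ∃ i, g i ω ≠ 0 := by
        have hmem := (measure_eq_zero_iff_ae_notMem).mp hN
        filter_upwards [hmem] with ω hω
        simpa using hω
      filter_upwards [ae_all_iff.mpr hj, hcov] with ω hω hex
      obtain ⟨k, hk⟩ := hAcov ω hex
      have hk1 : ω ∉ A (k-1) := fun h => hsub_ne k (hAuniq ω (k-1) k h hk)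
      have ha0 : ⇑a ω = 0 := by
        have h1 := hω k
        rw [Set.indicator_of_notMem hk1, mul_zero, add_zero] at h1
        exact (mul_eq_zero.mp h1).resolve_right hk.2
      refine ⟨ha0, ?_⟩
      have h1 := hω (k+1)
      rw [add_sub_cancel_right, Set.indicator_of_mem hk, mul_one, ha0, zero_mul, zero_add] at h1
      exact h1
    constructor
    · exact eq_zero_of_aeeq (aeeq_self a) (hal.mono fun ω h => h.1)
    · exact eq_zero_of_aeeq (aeeq_self b) (hal.mono fun ω h => h.2)
  -- distinctness facts
  have h0y : (0 : Fin n → Ω →ₘ[P] ℝ) ≠ y := by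
    intro h
    have hc : (1 : Ω →ₘ[P] ℝ) • y + (0 : Ω →ₘ[P] ℝ) • z = 0 := by
      funext i
      show 1 * y i + 0 * z i = 0
      have hyi : y i = 0 := by rw [← h]; rfl
      rw [hyi]; ring
    exact one_ne_zero' ((hindep _ _ hc).1)
  have h0z : (0 : Fin n → Ω →ₘ[P] ℝ) ≠ z := by
    intro h
    have hc : (0 : Ω →ₘ[P] ℝ) • y + (1 : Ω →ₘ[P] ℝ) • z = 0 := by
      funext i
      show 0 * y i + 1 * z i = 0
      have hzi : z i = 0 := by rw [← h]; rfl
      rw [hzi]; ring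
    exact one_ne_zero' ((hindep _ _ hc).2)
  have hyz : y ≠ z := by
    intro h
    have hc : (1 : Ω →ₘ[P] ℝ) • y + (-1 : Ω →ₘ[P] ℝ) • z = 0 := by
      funext i
      show 1 * y i + (-1) * z i = 0
      have hzi : z i = y i := by rw [← h]
      rw [hzi]; ring
    have := (hindep _ _ hc).1
    exact one_ne_zero' this
  have hnyz : -y ≠ -z := fun h => hyz (neg_injective h)
  have hzny : z ≠ -y := by
    intro h
    have hc : (1 : Ω →ₘ[P] ℝ) • y + (1 : Ω →ₘ[P] ℝ) • z = 0 := by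
      funext i
      show 1 * y i + 1 * z i = 0
      have hzi : z i = -(y i) := by rw [h]; rfl
      rw [hzi]; ring
    exact one_ne_zero' ((hindep _ _ hc).1)
  have hnzy : -z ≠ y := by
    intro h
    have hc : (1 : Ω →ₘ[P] ℝ) • y + (1 : Ω →ₘ[P] ℝ) • z = 0 := by
      funext i
      show 1 * y i + 1 * z i = 0
      have hyi : y i = -(z i) := by rw [← h]; rfl
      rw [hyi]; ring
    exact one_ne_zero' ((hindep _ _ hc).1)
  -- existence of the scalars ξ and ζ
  have hxi : ∃ ξ : Ω →ₘ[P] ℝ, S (-y) = ξ • S y := by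
    have hmem : S (-y) ∈ S '' {w | ∃ lam : Ω →ₘ[P] ℝ,
        w = lam • (0 : Fin n → Ω →ₘ[P] ℝ) + (1 - lam) • y} := by
      refine ⟨-y, ⟨2, ?_⟩, rfl⟩
      funext i
      show -(y i) = 2 * (0 : Ω →ₘ[P] ℝ) + (1 - 2) * y i
      ring
    rw [hline 0 y h0y] at hmem
    obtain ⟨lam, hlam⟩ := hmem
    refine ⟨1 - lam, ?_⟩
    rw [hlam, hS0]
    funext i
    show lam * (0 : Ω →ₘ[P] ℝ) + (1 - lam) * S y i = (1 - lam) * S y i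
    ring
  have hzeta : ∃ ζ : Ω →ₘ[P] ℝ, S (-z) = ζ • S z := by
    have hmem : S (-z) ∈ S '' {w | ∃ lam : Ω →ₘ[P] ℝ,
        w = lam • (0 : Fin n → Ω →ₘ[P] ℝ) + (1 - lam) • z} := by
      refine ⟨-z, ⟨2, ?_⟩, rfl⟩
      funext i
      show -(z i) = 2 * (0 : Ω →ₘ[P] ℝ) + (1 - 2) * z i
      ring
    rw [hline 0 z h0z] at hmem
    obtain ⟨lam, hlam⟩ := hmem
    refine ⟨1 - lam, ?_⟩
    rw [hlam, hS0]
    funext i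
    show lam * (0 : Ω →ₘ[P] ℝ) + (1 - lam) * S z i = (1 - lam) * S z i
    ring
  obtain ⟨ξ, hξ⟩ := hxi
  obtain ⟨ζ, hζ⟩ := hzeta
  -- measurable representatives of ξ and ζ
  have hum0 : AEMeasurable (⇑ξ) P := ξ.aestronglyMeasurable.aemeasurable
  have hvm0 : AEMeasurable (⇑ζ) P := ζ.aestronglyMeasurable.aemeasurable
  obtain ⟨u, hum, hu⟩ : ∃ u : Ω → ℝ, Measurable u ∧ ⇑ξ =ᵐ[P] u :=
    ⟨hum0.mk _, hum0.measurable_mk, hum0.ae_eq_mk⟩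
  obtain ⟨v, hvm, hv⟩ : ∃ v : Ω → ℝ, Measurable v ∧ ⇑ζ =ᵐ[P] v :=
    ⟨hvm0.mk _, hvm0.measurable_mk, hvm0.ae_eq_mk⟩
  -- pulling back localized equalities of line points
  have pullback : ∀ (x₁ x₂ x₃ x₄ : Fin n → Ω →ₘ[P] ℝ), x₁ ≠ x₂ → x₃ ≠ x₄ →
      ∀ (lamL muL : Ω →ₘ[P] ℝ) (C : Set Ω) (hC : MeasurableSet C),
      ind P hC • (lamL • S x₁ + (1 - lamL) • S x₂) =
        ind P hC • (muL • S x₃ + (1 - muL) • S x₄) →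
      ∃ l m : Ω →ₘ[P] ℝ,
        ind P hC • (l • x₁ + (1 - l) • x₂) = ind P hC • (m • x₃ + (1 - m) • x₄) := by
    intro x₁ x₂ x₃ x₄ h12 h34 lamL muL C hC heq
    have hp : (lamL • S x₁ + (1 - lamL) • S x₂) ∈
        S '' {w | ∃ lam : Ω →ₘ[P] ℝ, w = lam • x₁ + (1 - lam) • x₂} := by
      rw [hline x₁ x₂ h12]; exact ⟨lamL, rfl⟩
    have hq : (muL • S x₃ + (1 - muL) • S x₄) ∈
        S '' {w | ∃ lam : Ω →ₘ[P] ℝ, w = lam • x₃ + (1 - lam) • x₄} := by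
      rw [hline x₃ x₄ h34]; exact ⟨muL, rfl⟩
    obtain ⟨p₁, ⟨l, hl⟩, hSp⟩ := hp
    obtain ⟨q₁, ⟨m, hm⟩, hSq⟩ := hq
    refine ⟨l, m, ?_⟩
    rw [← hl, ← hm]
    exact locinj S hinj hloc hS0 hC (by rw [hSp, hSq]; exact heq)
  -- from a localized coincidence on the (y,z) vs (-y,-z) lines, conclude nullity
  have concl1 : ∀ (C : Set Ω) (hC : MeasurableSet C) (l m : Ω →ₘ[P] ℝ),
      ind P hC • (l • y + (1-l) • z) = ind P hC • (m • (-y) + (1-m) • (-z)) → P C = 0 := by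
    intro C hC l m h
    have hab : (ind P hC * (l + m)) • y + (ind P hC * (2 - l - m)) • z = 0 := by
      funext i
      have hi : ind P hC * (l * y i + (1-l) * z i) =
          ind P hC * (m * (-(y i)) + (1-m) * (-(z i))) := congrFun h i
      show ind P hC * (l + m) * y i + ind P hC * (2 - l - m) * z i = 0
      linear_combination hi
    obtain ⟨h1, h2⟩ := hindep _ _ hab
    apply ind_mul_two_eq_zero hC
    linear_combination h1 + h2
  have concl2 : ∀ (C : Set Ω) (hC : MeasurableSet C) (l m : Ω →ₘ[P] ℝ),
      ind P hC • (l • z + (1-l) • (-y)) = ind P hC • (m • (-z) + (1-m) • y) → P C = 0 := by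
    intro C hC l m h
    have hab : (ind P hC * (l + m - 2)) • y + (ind P hC * (l + m)) • z = 0 := by
      funext i
      have hi : ind P hC * (l * z i + (1-l) * (-(y i))) =
          ind P hC * (m * (-(z i)) + (1-m) * y i) := congrFun h i
      show ind P hC * (l + m - 2) * y i + ind P hC * (l + m) * z i = 0
      linear_combination hi
    obtain ⟨h1, h2⟩ := hindep _ _ hab
    apply ind_mul_two_eq_zero hC
    linear_combination h2 - h1
  -- PAIR 1 : lines l(y,z) and l(-y,-z)
  set C₁ : Set Ω := {ω | v ω ≠ u ω ∨ v ω = 1} with hC₁def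
  have hC₁m : MeasurableSet C₁ := by
    have h1 : C₁ = {ω | v ω = u ω}ᶜ ∪ v ⁻¹' {1} := by
      ext ω; simp [hC₁def]
    rw [h1]
    exact ((measurableSet_eq_fun hvm hum).compl).union (hvm (measurableSet_singleton 1))
  set mu1 : Ω → ℝ := fun ω => (v ω - 1)/(v ω - u ω) with hmu1def
  have hmu1m : Measurable mu1 := (hvm.sub measurable_const).div (hvm.sub hum)
  obtain ⟨muL, hmu⟩ : ∃ muL : Ω →ₘ[P] ℝ, ⇑muL =ᵐ[P] mu1 :=
    ⟨AEEqFun.mk mu1 hmu1m.aestronglyMeasurable, AEEqFun.coeFn_mk _ _⟩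
  set lamL : Ω →ₘ[P] ℝ := muL * ξ with hlamLdef
  have h1b : ind P hC₁m * ((1 - lamL) - (1 - muL) * ζ) = 0 := by
    apply eq_zero_of_aeeq (aeeq_mul (coeFn_ind hC₁m)
      (aeeq_sub (aeeq_sub aeeq_one (aeeq_mul hmu hu))
        (aeeq_mul (aeeq_sub aeeq_one hmu) hv)))
    refine Filter.Eventually.of_forall fun ω => ?_
    by_cases hωC : ω ∈ C₁
    · rw [Set.indicator_of_mem hωC, one_mul]
      rcases eq_or_ne (v ω) (u ω) with he | hne
      · have hv1 : v ω = 1 := by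
          rcases hωC with h | h
          · exact absurd he h
          · exact h
        have hmu0 : mu1 ω = 0 := by rw [hmu1def]; simp [he]
        rw [hmu0, hv1]; ring
      · have hvu : v ω - u ω ≠ 0 := sub_ne_zero.mpr hne
        rw [hmu1def]
        field_simp
        ring
    · rw [Set.indicator_of_notMem hωC, zero_mul]
  have heq1 : ind P hC₁m • (lamL • S y + (1 - lamL) • S z) =
      ind P hC₁m • (muL • S (-y) + (1 - muL) • S (-z)) := by
    funext i
    have hyi : S (-y) i = ξ * S y i := by rw [hξ]; rfl
    have hzi : S (-z) i = ζ * S z i := by rw [hζ]; rfl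
    show ind P hC₁m * (lamL * S y i + (1 - lamL) * S z i) =
        ind P hC₁m * (muL * S (-y) i + (1 - muL) * S (-z) i)
    rw [hyi, hzi]
    have h1a : lamL - muL * ξ = 0 := by rw [hlamLdef]; ring
    linear_combination (ind P hC₁m) * (S y i) * h1a + (S z i) * h1b
  obtain ⟨l₁, m₁, hlm₁⟩ := pullback y z (-y) (-z) hyz hnyz lamL muL C₁ hC₁m heq1
  have hPC₁ : P C₁ = 0 := concl1 C₁ hC₁m l₁ m₁ hlm₁
  -- PAIR 2 : lines l(z,-y) and l(-z,y)
  set C₂ : Set Ω := {ω | 1 - v ω * u ω ≠ 0 ∨ v ω * (1 - u ω) = 0} with hC₂def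
  have hC₂m : MeasurableSet C₂ := by
    have h1 : C₂ = ((fun ω => 1 - v ω * u ω) ⁻¹' {0})ᶜ ∪ (fun ω => v ω * (1 - u ω)) ⁻¹' {0} := by
      ext ω; simp [hC₂def]
    rw [h1]
    exact (((measurable_const.sub (hvm.mul hum)) (measurableSet_singleton 0)).compl).union
      ((hvm.mul (measurable_const.sub hum)) (measurableSet_singleton 0))
  set lam2 : Ω → ℝ := fun ω => (v ω * (1 - u ω))/(1 - v ω * u ω) with hlam2def
  have hlam2m : Measurable lam2 :=
    (hvm.mul (measurable_const.sub hum)).div (measurable_const.sub (hvm.mul hum))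
  obtain ⟨lamL₂, hlam₂⟩ : ∃ lamL₂ : Ω →ₘ[P] ℝ, ⇑lamL₂ =ᵐ[P] lam2 :=
    ⟨AEEqFun.mk lam2 hlam2m.aestronglyMeasurable, AEEqFun.coeFn_mk _ _⟩
  set muL₂ : Ω →ₘ[P] ℝ := 1 - ξ + lamL₂ * ξ with hmuL₂def
  have h2a : ind P hC₂m * (lamL₂ - muL₂ * ζ) = 0 := by
    apply eq_zero_of_aeeq (aeeq_mul (coeFn_ind hC₂m)
      (aeeq_sub hlam₂ (aeeq_mul (aeeq_add (aeeq_sub aeeq_one hu) (aeeq_mul hlam₂ hu)) hv)))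
    refine Filter.Eventually.of_forall fun ω => ?_
    by_cases hωC : ω ∈ C₂
    · rw [Set.indicator_of_mem hωC, one_mul]
      by_cases h0 : 1 - v ω * u ω = 0
      · have hl0 : lam2 ω = 0 := by rw [hlam2def]; simp [h0]
        have hv0 : v ω * (1 - u ω) = 0 := by
          rcases hωC with h | h
          · exact absurd h0 h
          · exact h
        rw [hl0]
        linear_combination -hv0
      · rw [hlam2def]
        field_simp
        ring
    · rw [Set.indicator_of_notMem hωC, zero_mul]
  have h2b : ind P hC₂m * ((1 - lamL₂) * ξ - (1 - muL₂)) = 0 := by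
    rw [hmuL₂def]; ring
  have heq2 : ind P hC₂m • (lamL₂ • S z + (1 - lamL₂) • S (-y)) =
      ind P hC₂m • (muL₂ • S (-z) + (1 - muL₂) • S y) := by
    funext i
    have hyi : S (-y) i = ξ * S y i := by rw [hξ]; rfl
    have hzi : S (-z) i = ζ * S z i := by rw [hζ]; rfl
    show ind P hC₂m * (lamL₂ * S z i + (1 - lamL₂) * S (-y) i) =
        ind P hC₂m * (muL₂ * S (-z) i + (1 - muL₂) * S y i)
    rw [hyi, hzi]
    linear_combination (S z i) * h2a + (S y i) * h2b
  obtain ⟨l₂, m₂, hlm₂⟩ := pullback z (-y) (-z) y hzny hnzy lamL₂ muL₂ C₂ hC₂m heq2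
  have hPC₂ : P C₂ = 0 := concl2 C₂ hC₂m l₂ m₂ hlm₂
  -- combine : ξ = -1 a.e.
  have hfin : ξ = -1 := by
    refine AEEqFun.ext ?_
    have hneg1 : ⇑(-1 : Ω →ₘ[P] ℝ) =ᵐ[P] fun _ => (-1 : ℝ) := by
      filter_upwards [AEEqFun.coeFn_neg (1 : Ω →ₘ[P] ℝ), aeeq_one (P := P)] with ω h1 h2
      rw [h1]; show -(⇑(1 : Ω →ₘ[P] ℝ) ω) = -1; rw [h2]
    filter_upwards [(measure_eq_zero_iff_ae_notMem).mp hPC₁, (measure_eq_zero_iff_ae_notMem).mp hPC₂,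
      hu, hneg1] with ω h1 h2 hω hn1
    rw [hω, hn1]
    simp only [hC₁def, hC₂def, Set.mem_setOf_eq] at h1 h2
    push_neg at h1 h2
    obtain ⟨hvu, hv1⟩ := h1
    obtain ⟨h2a', h2b'⟩ := h2
    rw [hvu] at h2a' hv1
    have hfact : (u ω - 1) * (u ω + 1) = 0 := by linear_combination -h2a'
    rcases mul_eq_zero.mp hfact with h | h
    · exact absurd (by linarith : u ω = 1) hv1
    · linarith
  rw [hξ, hfin]
  funext i
  show (-1 : Ω →ₘ[P] ℝ) * S y i = -(S y i)
  exact neg_one_mul _
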